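/- arXiv:2411.11653 — 5 statements merged into one kernel-verified Lean document; each statement's English description precedes it below -/
import Mathlib

section
/- Let $\phi, \varepsilon, \alpha \in \mathbb{R}$ with $2\alpha\varepsilon \neq 1$, and define on $D^0 = \{r < 1\}$ (with $r^2 = x_2^2+x_3^2$) the velocity $u^{\rm N}(x) = \frac{2\phi}{\pi}\big((1-r^2) - \varepsilon\alpha(1-2r^2)\big)e_1$ and pressure $p^{\rm N}(x) = -\frac{8\phi}{\pi}x_1 + \varepsilon\alpha\frac{16\phi}{\pi}x_1$. Then $(u^{\rm N},p^{\rm N})$ solves $-\Delta u^{\rm N} + (u^{\rm N}\cdot\nabla)u^{\rm N} + \nabla p^{\rm N} = 0$, $\nabla\cdot u^{\rm N}=0$ in $D^0$, satisfies the non-penetration condition $u^{\rm N}\cdot\nu = 0$ on $\Gamma^0 = \{r=1\}$, and satisfies the Navier slip condition $(I - \nu\otimes\nu)u^{\rm N} = \lambda^\varepsilon (I-\nu\otimes\nu)\mathbb{D}(u^{\rm N})\nu$ on $\Gamma^0$ with slip length $\lambda^\varepsilon = \frac{\alpha\varepsilon}{1 - 2\alpha\varepsilon}$. -/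
/-- Partial derivative in the `i`-th coordinate direction. -/
noncomputable def pd3 (i : Fin 3) (f : (Fin 3 → ℝ) → ℝ) (x : Fin 3 → ℝ) : ℝ :=
  fderiv ℝ f x (Pi.single i 1)

/-!
The velocity is a Poiseuille-type profile `(a + b r²) e₀` with `a = A (1 - εα)`, `b = A (2εα - 1)`,
`A = 2φ/π`. Its Laplacian is the constant `4b e₀` and its convective term vanishes, so the linear
pressure `4b x₀` balances it. On `r = 1` the velocity is tangential and `𝔻(u)ν = -b e₀`, so the
slip condition reduces to `a + b = -λ b`, i.e. `λ = εα / (1 - 2εα)`.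
-/

theorem pd3_const (c : ℝ) (i : Fin 3) (x : Fin 3 → ℝ) : pd3 i (fun _ => c) x = 0 := by
  simp [pd3]

theorem pd3_const_mul_apply (c : ℝ) (k i : Fin 3) (x : Fin 3 → ℝ) :
    pd3 i (fun y => c * y k) x = if i = k then c else 0 := by
  have h : HasFDerivAt (fun y : Fin 3 → ℝ => c * y k) _ x :=
    (hasFDerivAt_apply (𝕜 := ℝ) (F' := fun _ : Fin 3 => ℝ) k x).const_mul c
  rw [pd3, h.fderiv]
  simp [Pi.single_apply, eq_comm]

theorem pd3_add_mul_radiusSq (a b : ℝ) (i : Fin 3) (x : Fin 3 → ℝ) :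
    pd3 i (fun y => a + b * (y 1 ^ 2 + y 2 ^ 2)) x = if i = 0 then 0 else 2 * b * x i := by
  have hproj (k : Fin 3) := hasFDerivAt_apply (𝕜 := ℝ) (F' := fun _ : Fin 3 => ℝ) k x
  have h : HasFDerivAt (fun y : Fin 3 → ℝ => a + b * (y 1 ^ 2 + y 2 ^ 2)) _ x :=
    ((((hproj 1).pow 2).add ((hproj 2).pow 2)).const_mul b).const_add a
  rw [pd3, h.fderiv]
  fin_cases i <;> simp <;> ring

def poiseuilleFlow (a b : ℝ) (x : Fin 3 → ℝ) (j : Fin 3) : ℝ :=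
  if j = 0 then a + b * (x 1 ^ 2 + x 2 ^ 2) else 0

def cylinderNormal (x : Fin 3 → ℝ) (j : Fin 3) : ℝ :=
  if j = 0 then 0 else -(x j)

noncomputable def strainRate (u : (Fin 3 → ℝ) → Fin 3 → ℝ) (x : Fin 3 → ℝ) (j k : Fin 3) : ℝ :=
  (pd3 k (fun y => u y j) x + pd3 j (fun y => u y k) x) / 2

namespace poiseuilleFlow

variable (a b : ℝ)

theorem pd3_apply (i j : Fin 3) (x : Fin 3 → ℝ) :
    pd3 i (fun y => poiseuilleFlow a b y j) x = (if j = 0 ∧ i ≠ 0 then 2 * b else 0) * x i := by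
  by_cases hj : j = 0
  · simp only [poiseuilleFlow, hj, if_true, pd3_add_mul_radiusSq]
    split_ifs <;> simp_all
  · simp [poiseuilleFlow, hj, pd3_const]

theorem pd3_pd3_apply (i j : Fin 3) (x : Fin 3 → ℝ) :
    pd3 i (pd3 i (fun y => poiseuilleFlow a b y j)) x = if j = 0 ∧ i ≠ 0 then 2 * b else 0 := by
  simp only [funext (pd3_apply a b i j), pd3_const_mul_apply, if_true]

-- The convective term vanishes: the flow points along `x₀` and does not depend on `x₀`.
theorem navierStokes (x : Fin 3 → ℝ) (j : Fin 3) :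
    -(∑ i : Fin 3, pd3 i (pd3 i (fun y => poiseuilleFlow a b y j)) x)
      + (∑ i : Fin 3, poiseuilleFlow a b x i * pd3 i (fun y => poiseuilleFlow a b y j) x)
      + pd3 j (fun y => 4 * b * y 0) x = 0 := by
  simp only [Fin.sum_univ_three, pd3_pd3_apply, pd3_apply, pd3_const_mul_apply]
  fin_cases j <;> simp [poiseuilleFlow]
  ring

theorem divergence (x : Fin 3 → ℝ) : ∑ i : Fin 3, pd3 i (fun y => poiseuilleFlow a b y i) x = 0 := by
  simp [pd3_apply]

theorem sum_mul_cylinderNormal (x : Fin 3 → ℝ) :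
    ∑ i : Fin 3, poiseuilleFlow a b x i * cylinderNormal x i = 0 := by
  simp [Fin.sum_univ_three, poiseuilleFlow, cylinderNormal]

theorem strainRate_mulVec_cylinderNormal {x : Fin 3 → ℝ} (hx : x 1 ^ 2 + x 2 ^ 2 = 1) (j : Fin 3) :
    ∑ k : Fin 3, strainRate (poiseuilleFlow a b) x j k * cylinderNormal x k
      = if j = 0 then -b else 0 := by
  fin_cases j <;> simp [Fin.sum_univ_three, strainRate, pd3_apply, cylinderNormal]
  linear_combination (-b) * hx

theorem navierSlip {lam : ℝ} (hlam : a + b = -(lam * b)) {x : Fin 3 → ℝ}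
    (hx : x 1 ^ 2 + x 2 ^ 2 = 1) (j : Fin 3) :
    poiseuilleFlow a b x j
        - (∑ i : Fin 3, cylinderNormal x i * poiseuilleFlow a b x i) * cylinderNormal x j
      = lam * ((∑ k : Fin 3, strainRate (poiseuilleFlow a b) x j k * cylinderNormal x k)
          - (∑ i : Fin 3, cylinderNormal x i *
              ∑ k : Fin 3, strainRate (poiseuilleFlow a b) x i k * cylinderNormal x k)
            * cylinderNormal x j) := by
  simp only [strainRate_mulVec_cylinderNormal a b hx]
  fin_cases j <;> simp [poiseuilleFlow, cylinderNormal, hx]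
  linarith

end poiseuilleFlow

theorem stmt_5 (φ ε α : ℝ) (hα : 2 * α * ε ≠ 1) :
    let uN : (Fin 3 → ℝ) → Fin 3 → ℝ :=
      fun x j => if j = 0 then
        (2 * φ / Real.pi) *
          ((1 - ((x 1) ^ 2 + (x 2) ^ 2)) - ε * α * (1 - 2 * ((x 1) ^ 2 + (x 2) ^ 2)))
      else 0
    let pN : (Fin 3 → ℝ) → ℝ :=
      fun x => -(8 * φ / Real.pi) * x 0 + ε * α * (16 * φ / Real.pi) * x 0
    -- inward unit normal on Γ⁰ = {r = 1}
    let ν : (Fin 3 → ℝ) → Fin 3 → ℝ := fun x j => if j = 0 then 0 else -(x j)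
    -- strain rate tensor 𝔻(uᴺ)
    let Dm : (Fin 3 → ℝ) → Fin 3 → Fin 3 → ℝ :=
      fun x j k => (pd3 k (fun y => uN y j) x + pd3 j (fun y => uN y k) x) / 2
    let lam : ℝ := α * ε / (1 - 2 * α * ε)
    -- stationary Navier-Stokes equations in D⁰
    (∀ x : Fin 3 → ℝ, (x 1) ^ 2 + (x 2) ^ 2 < 1 → ∀ j : Fin 3,
        -(∑ i : Fin 3, pd3 i (pd3 i (fun y => uN y j)) x)
          + (∑ i : Fin 3, uN x i * pd3 i (fun y => uN y j) x)
          + pd3 j pN x = 0) ∧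
    -- divergence free
    (∀ x : Fin 3 → ℝ, (x 1) ^ 2 + (x 2) ^ 2 < 1 →
        (∑ i : Fin 3, pd3 i (fun y => uN y i) x) = 0) ∧
    -- non-penetration condition uᴺ · ν = 0 on Γ⁰
    (∀ x : Fin 3 → ℝ, (x 1) ^ 2 + (x 2) ^ 2 = 1 →
        (∑ i : Fin 3, uN x i * ν x i) = 0) ∧
    -- Navier slip condition (I - ν⊗ν) uᴺ = λᵉ (I - ν⊗ν) 𝔻(uᴺ) ν on Γ⁰
    (∀ x : Fin 3 → ℝ, (x 1) ^ 2 + (x 2) ^ 2 = 1 → ∀ j : Fin 3,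
        uN x j - (∑ i : Fin 3, ν x i * uN x i) * ν x j
          = lam * ((∑ k : Fin 3, Dm x j k * ν x k)
              - (∑ i : Fin 3, ν x i * (∑ k : Fin 3, Dm x i k * ν x k)) * ν x j)) := by
  intro uN pN ν Dm lam
  set A := 2 * φ / Real.pi
  set b := A * (2 * (ε * α) - 1)
  have huN : uN = poiseuilleFlow (A * (1 - ε * α)) b := by
    funext x j
    simp only [uN, poiseuilleFlow]
    split_ifs <;> ring
  have hpN : pN = fun y => 4 * b * y 0 := by
    funext y
    simp only [pN, b, A]
    ring
  have hDm : Dm = strainRate uN := rfl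
  have hlam : A * (1 - ε * α) + b = -(lam * b) := by
    have : 1 - ε * α * 2 ≠ 0 := fun h => hα (by linarith)
    simp only [lam, b]
    field_simp
    ring
  rw [hDm, huN, hpN]
  exact ⟨fun x _ => poiseuilleFlow.navierStokes _ _ x,
    fun x _ => poiseuilleFlow.divergence _ _ x,
    fun x _ => poiseuilleFlow.sum_mul_cylinderNormal _ _ x,
    fun x hx => poiseuilleFlow.navierSlip _ _ hlam hx⟩
end

section
/- Let $\omega_1, \omega_2 \subset \mathbb{R}^d$ be bounded John domains with centers $x^1, x^2$ and John constants $L_1, L_2$, and suppose there is a Lipschitz curve $\gamma$ in $\omega_1 \cup \omega_2$ connecting $x^1$ and $x^2$ with $\operatorname{dist}(\gamma, \partial(\omega_1\cup\omega_2)) \ge d_\gamma > 0$. Then $\omega_1 \cup \omega_2$ is a John domain, with a John constant depending only on $L_1$, $L_2$, $d_\gamma$, the Lipschitz constant and length of $\gamma$, and the diameters of $\omega_1, \omega_2$. -/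
/-!
Take the center `x₂` of `ω₂` as center of the union and measure depth by the distance to the
complement, which at points of a set equals the distance to its frontier. Points of `ω₂` keep
their John curves. A point `y ∈ ω₁` with `|y - x₂| < d_γ / 2` is joined to `x₂` by a segment,
which stays in the ball of radius `d_γ` about `x₂`. Any other `y ∈ ω₁` follows its John curve
to `x₁` and then `γ` to `x₂`; this curve has length at most `diam ω₁ + max Kγ 1` and depth at
least `min (s / L₁) d_γ` at time `s`, so reparametrized on `[0, |y - x₂|]` with
`|y - x₂| ≥ d_γ / 2` it is a John curve with a constant depending only on the data.
-/

/-- `ω` is a John domain with center `c` and constant `L`: every point `y ∈ ω` is joined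
to `c` by an `L`-Lipschitz curve staying in `ω` whose distance to the boundary grows
at least linearly. -/
def IsJohnDomain {d : ℕ} (ω : Set (EuclideanSpace ℝ (Fin d)))
    (c : EuclideanSpace ℝ (Fin d)) (L : ℝ) : Prop :=
  c ∈ ω ∧ ∀ y ∈ ω, ∃ ρ : ℝ → EuclideanSpace ℝ (Fin d),
    LipschitzOnWith (Real.toNNReal L) ρ (Set.Icc 0 (dist y c)) ∧
    (∀ t ∈ Set.Icc 0 (dist y c), ρ t ∈ ω) ∧
    ρ 0 = y ∧ ρ (dist y c) = c ∧
    ∀ t ∈ Set.Icc 0 (dist y c), t / L ≤ Metric.infDist (ρ t) (frontier ω)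

open Set Metric

section

variable {X : Type*} [TopologicalSpace X] {s t : Set X}

theorem IsPreconnected.inter_frontier_nonempty (hs : IsPreconnected s)
    (hst : (s ∩ t).Nonempty) (hst' : (s \ t).Nonempty) : (s ∩ frontier t).Nonempty := by
  by_contra! h
  have hcover : s ⊆ interior t ∪ (closure t)ᶜ := fun z hz => by
    by_cases hzt : z ∈ closure t
    · refine Or.inl (by_contra fun hzi => ?_)
      exact (h ▸ ⟨hz, hzt, hzi⟩ : z ∈ (∅ : Set X))
    · exact Or.inr hzt
  have hdisj : Disjoint (interior t) (closure t)ᶜ :=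
    disjoint_compl_right.mono_left (interior_subset.trans subset_closure)
  obtain ⟨x, hxs, hxt⟩ := hst
  obtain ⟨w, hws, hwt⟩ := hst'
  rcases hs.subset_or_subset isOpen_interior isClosed_closure.isOpen_compl hdisj hcover
    with hsub | hsub
  · exact hwt (interior_subset (hsub hws))
  · exact hsub hxs (subset_closure hxt)

end

theorem LipschitzOnWith.ite_le {α : Type*} [PseudoMetricSpace α] {f g : ℝ → α} {K : NNReal}
    {a b c : ℝ} (hf : LipschitzOnWith K f (Icc a b)) (hg : LipschitzOnWith K g (Icc b c))
    (hfg : f b = g b) :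
    LipschitzOnWith K (fun s => if s ≤ b then f s else g s) (Icc a c) := by
  have hb : ∀ x ∈ Icc a c, ∀ y ∈ Icc a c, x ≤ b → b < y →
      dist (f x) (g y) ≤ K * dist x y := fun x hx y hy hxb hby => by
    calc dist (f x) (g y) ≤ dist (f x) (f b) + dist (g b) (g y) :=
          hfg ▸ dist_triangle _ _ _
      _ ≤ K * dist x b + K * dist b y :=
          add_le_add (hf.dist_le_mul x ⟨hx.1, hxb⟩ b ⟨hx.1.trans hxb, le_rfl⟩)
            (hg.dist_le_mul b ⟨le_rfl, hby.le.trans hy.2⟩ y ⟨hby.le, hy.2⟩)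
      _ = K * dist x y := by
          rw [Real.dist_eq, Real.dist_eq, Real.dist_eq, abs_of_nonpos (by linarith),
            abs_of_nonpos (by linarith), abs_of_nonpos (by linarith)]
          ring
  refine LipschitzOnWith.of_dist_le_mul fun x hx y hy => ?_
  by_cases hxb : x ≤ b <;> by_cases hyb : y ≤ b <;> simp only [hxb, hyb, if_true, if_false]
  · exact hf.dist_le_mul x ⟨hx.1, hxb⟩ y ⟨hy.1, hyb⟩
  · exact hb x hx y hy hxb (not_le.1 hyb)
  · rw [dist_comm, dist_comm x]; exact hb y hy x hx hyb (not_le.1 hxb)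
  · exact hg.dist_le_mul x ⟨(not_le.1 hxb).le, hx.2⟩ y ⟨(not_le.1 hyb).le, hy.2⟩

theorem mapsTo_sub_div_Icc {a K : ℝ} (hK : 0 < K) :
    MapsTo (fun s => (s - a) / K) (Icc a (a + K)) (Icc 0 1) := fun s hs =>
  ⟨div_nonneg (by linarith [hs.1]) hK.le, (div_le_one hK).2 (by linarith [hs.2])⟩

theorem LipschitzOnWith.comp_sub_div {α : Type*} [PseudoMetricSpace α] {f : ℝ → α} {K a : ℝ}
    (hK : 0 < K) (hf : LipschitzOnWith (Real.toNNReal K) f (Icc 0 1)) :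
    LipschitzOnWith 1 (fun s => f ((s - a) / K)) (Icc a (a + K)) := by
  refine LipschitzOnWith.of_dist_le_mul fun s hs t ht => ?_
  calc dist (f ((s - a) / K)) (f ((t - a) / K))
      ≤ K * dist ((s - a) / K) ((t - a) / K) := by
        simpa [Real.coe_toNNReal _ hK.le] using
          hf.dist_le_mul _ (mapsTo_sub_div_Icc hK hs) _ (mapsTo_sub_div_Icc hK ht)
    _ = 1 * dist s t := by
        rw [Real.dist_eq, Real.dist_eq, ← sub_div, sub_sub_sub_cancel_right, abs_div,
          abs_of_pos hK]
        field_simp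

section

variable {X : Type*} [PseudoMetricSpace X]

/-- The curves of `IsJohnDomain`, except that distances are measured to `ωᶜ` rather than to
`frontier ω`; on `ω` the two agree in a real normed space (`infDist_frontier_eq_infDist_compl`). -/
structure IsJohnCurve (ω : Set X) (L : ℝ) (y c : X) (ρ : ℝ → X) : Prop where
  lipschitzOnWith : LipschitzOnWith (Real.toNNReal L) ρ (Icc 0 (dist y c))
  mapsTo : MapsTo ρ (Icc 0 (dist y c)) ω
  apply_zero : ρ 0 = y
  apply_dist : ρ (dist y c) = c
  div_le_infDist : ∀ t ∈ Icc 0 (dist y c), t / L ≤ infDist (ρ t) ωᶜ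

variable {ω U : Set X} {y a c : X} {ρ σ : ℝ → X} {L L' : ℝ}

theorem isJohnCurve_const (hy : y ∈ ω) : IsJohnCurve ω L y y (fun _ => y) where
  lipschitzOnWith := LipschitzOnWith.of_dist_le_mul fun _ _ _ _ => by
    rw [dist_self]; positivity
  mapsTo _ _ := hy
  apply_zero := rfl
  apply_dist := rfl
  div_le_infDist t ht := by
    rw [dist_self] at ht
    rw [le_antisymm ht.2 ht.1, zero_div]
    exact infDist_nonneg

theorem IsJohnCurve.mono (h : IsJohnCurve ω L y c ρ) (hωU : ω ⊆ U) (hU : Uᶜ.Nonempty)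
    (hL : 0 < L) (hLL' : L ≤ L') : IsJohnCurve U L' y c ρ where
  lipschitzOnWith := h.lipschitzOnWith.weaken (Real.toNNReal_le_toNNReal hLL')
  mapsTo := h.mapsTo.mono_right hωU
  apply_zero := h.apply_zero
  apply_dist := h.apply_dist
  div_le_infDist t ht :=
    calc t / L' ≤ t / L := div_le_div_of_nonneg_left ht.1 hL hLL'
      _ ≤ infDist (ρ t) ωᶜ := h.div_le_infDist t ht
      _ ≤ infDist (ρ t) Uᶜ := infDist_le_infDist_of_subset (compl_subset_compl.2 hωU) hU

theorem isJohnCurve_comp_mul {M : NNReal} {L₀ δ S : ℝ} (hσ : LipschitzOnWith M σ (Icc 0 S))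
    (hσU : MapsTo σ (Icc 0 S) U) (hσ0 : σ 0 = y) (hσS : σ S = c)
    (hσδ : ∀ s ∈ Icc 0 S, min (s / L₀) δ ≤ infDist (σ s) Uᶜ)
    (hyc : 0 < dist y c) (hS : dist y c ≤ S) (hL₀ : 0 < L₀) (hL₀L : L₀ ≤ L)
    (hML : M * S ≤ L * dist y c) (hSδ : S ≤ L * δ) :
    IsJohnCurve U L y c (fun t => σ (S / dist y c * t)) := by
  set T := dist y c
  set r := S / T
  have hr : 1 ≤ r := (one_le_div hyc).2 hS
  have hMr : M * r ≤ L := by rw [mul_div_assoc', div_le_iff₀ hyc]; exact hML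
  have hrt : ∀ t ∈ Icc 0 T, r * t ∈ Icc 0 S := fun t ht =>
    ⟨mul_nonneg (by linarith) ht.1, (mul_le_mul_of_nonneg_left ht.2 (by linarith)).trans_eq
      (div_mul_cancel₀ S hyc.ne')⟩
  refine ⟨LipschitzOnWith.of_dist_le_mul fun a ha b hb => ?_, fun t ht => hσU (hrt t ht),
    by simpa using hσ0, by rwa [div_mul_cancel₀ S hyc.ne'], fun t ht => ?_⟩
  · calc dist (σ (r * a)) (σ (r * b)) ≤ M * dist (r * a) (r * b) :=
          hσ.dist_le_mul _ (hrt a ha) _ (hrt b hb)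
      _ = M * r * dist a b := by
          rw [Real.dist_eq, Real.dist_eq, ← mul_sub, abs_mul, abs_of_pos (by positivity)]; ring
      _ ≤ Real.toNNReal L * dist a b := by
          rw [Real.coe_toNNReal _ (by linarith)]; gcongr
  · have hLpos : 0 < L := hL₀.trans_le hL₀L
    refine le_trans (le_min ?_ ?_) (hσδ _ (hrt t ht))
    · calc t / L ≤ t / L₀ := div_le_div_of_nonneg_left ht.1 hL₀ hL₀L
        _ ≤ r * t / L₀ := by gcongr; nlinarith [ht.1]
    · rw [div_le_iff₀ hLpos]; linarith [ht.2]

theorem IsJohnCurve.exists_trans_deep_path {γ : ℝ → X} {L₀ K δ : ℝ}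
    (hρ : IsJohnCurve ω L₀ y a ρ) (hωU : ω ⊆ U) (hU : Uᶜ.Nonempty) (hL₀ : 0 < L₀) (hK : 0 < K)
    (hγ : LipschitzOnWith (Real.toNNReal K) γ (Icc 0 1)) (hγ0 : γ 0 = a) (hγ1 : γ 1 = c)
    (hγU : MapsTo γ (Icc 0 1) U) (hγδ : ∀ u ∈ Icc 0 1, δ ≤ infDist (γ u) Uᶜ) (hδ : 0 < δ)
    (hyc : δ ≤ 2 * dist y c) (hL₀L : L₀ ≤ L) (hL : 2 * max L₀ 1 * (dist y a + K) / δ ≤ L) :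
    ∃ ρ', IsJohnCurve U L y c ρ' := by
  replace hL := (div_le_iff₀ hδ).1 hL
  set T₁ := dist y a
  set σ : ℝ → X := fun s => if s ≤ T₁ then ρ s else γ ((s - T₁) / K)
  have hρU := hρ.mono hωU hU hL₀ le_rfl
  have hγ' : ∀ s ∈ Icc 0 (T₁ + K), ¬s ≤ T₁ → (s - T₁) / K ∈ Icc 0 1 := fun s hs hsT =>
    mapsTo_sub_div_Icc hK ⟨(not_le.1 hsT).le, hs.2⟩
  have hσ : LipschitzOnWith (max (Real.toNNReal L₀) 1) σ (Icc 0 (T₁ + K)) :=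
    (hρ.lipschitzOnWith.weaken (le_max_left _ _)).ite_le
      ((hγ.comp_sub_div hK).weaken (le_max_right _ _))
      (by rw [hρ.apply_dist, sub_self, zero_div, hγ0])
  have hM : ((max (Real.toNNReal L₀) 1 : NNReal) : ℝ) = max L₀ 1 := by
    rw [NNReal.coe_max, Real.coe_toNNReal _ hL₀.le, NNReal.coe_one]
  have hac : dist a c ≤ K := by
    simpa [hγ0, hγ1, Real.coe_toNNReal _ hK.le] using
      hγ.dist_le_mul 0 ⟨le_rfl, zero_le_one⟩ 1 ⟨zero_le_one, le_rfl⟩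
  have hS : dist y c ≤ T₁ + K := by linarith [dist_triangle y a c]
  have hMS : T₁ + K ≤ max L₀ 1 * (T₁ + K) :=
    le_mul_of_one_le_left (by positivity) (le_max_right _ _)
  have hLδ : L * δ ≤ L * (2 * dist y c) := mul_le_mul_of_nonneg_left hyc (by linarith)
  refine ⟨_, isJohnCurve_comp_mul (δ := δ) hσ (fun s hs => ?_)
    (by simp [σ, T₁, hρ.apply_zero]) ?_ (fun s hs => ?_) (by linarith) hS hL₀ hL₀L
    (by rw [hM]; linarith) (by linarith)⟩
  · by_cases hsT : s ≤ T₁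
    · simpa only [σ, if_pos hsT] using hρU.mapsTo ⟨hs.1, hsT⟩
    · simpa only [σ, if_neg hsT] using hγU (hγ' s hs hsT)
  · show (if T₁ + K ≤ T₁ then _ else _) = c
    rw [if_neg (by linarith), add_sub_cancel_left, div_self hK.ne', hγ1]
  · by_cases hsT : s ≤ T₁
    · simpa only [σ, if_pos hsT] using
        (min_le_left _ _).trans (hρU.div_le_infDist s ⟨hs.1, hsT⟩)
    · simpa only [σ, if_neg hsT] using (min_le_right _ _).trans (hγδ _ (hγ' s hs hsT))

end

section

variable {E : Type*} [NormedAddCommGroup E] [NormedSpace ℝ E]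

theorem infDist_frontier_eq_infDist_compl {s : Set E} {x : E} (hx : x ∈ s) :
    infDist x (frontier s) = infDist x sᶜ := by
  rcases sᶜ.eq_empty_or_nonempty with hs | ⟨w, hw⟩
  · rw [compl_empty_iff.1 hs, frontier_univ, compl_univ]
  have hreach : ∀ w ∈ sᶜ, ∃ z ∈ frontier s, dist x z ≤ dist x w := fun w hw => by
    obtain ⟨z, hzseg, hz⟩ := (convex_segment x w).isPreconnected.inter_frontier_nonempty
      ⟨x, left_mem_segment ℝ x w, hx⟩ ⟨w, right_mem_segment ℝ x w, hw⟩
    exact ⟨z, hz, by linarith [dist_add_dist_of_mem_segment hzseg, dist_nonneg (x := z) (y := w)]⟩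
  apply le_antisymm
  · refine (le_infDist ⟨w, hw⟩).2 fun w' hw' => ?_
    obtain ⟨z, hz, hzw⟩ := hreach w' hw'
    exact (infDist_le_dist_of_mem hz).trans hzw
  · obtain ⟨z, hz, -⟩ := hreach w hw
    rw [← infDist_closure (s := sᶜ)]
    exact infDist_le_infDist_of_subset (frontier_compl s ▸ frontier_subset_closure) ⟨z, hz⟩

theorem isJohnDomain_iff {d : ℕ} {ω : Set (EuclideanSpace ℝ (Fin d))}
    {c : EuclideanSpace ℝ (Fin d)} {L : ℝ} :
    IsJohnDomain ω c L ↔ c ∈ ω ∧ ∀ y ∈ ω, ∃ ρ, IsJohnCurve ω L y c ρ := by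
  refine and_congr_right fun _ => forall₂_congr fun y _ => exists_congr fun ρ => ?_
  refine ⟨fun ⟨hlip, hmem, h0, h1, hdist⟩ => ⟨hlip, hmem, h0, h1, fun t ht => ?_⟩,
    fun h => ⟨h.lipschitzOnWith, h.mapsTo, h.apply_zero, h.apply_dist, fun t ht => ?_⟩⟩
  · rw [← infDist_frontier_eq_infDist_compl (hmem t ht)]
    exact hdist t ht
  · rw [infDist_frontier_eq_infDist_compl (h.mapsTo ht)]
    exact h.div_le_infDist t ht

variable {U : Set E} {y c : E} {L : ℝ}

theorem isJohnCurve_lineMap (hyc : 2 * dist y c < infDist c Uᶜ) (hL : 1 ≤ L) :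
    IsJohnCurve U L y c (fun t => AffineMap.lineMap y c (t / dist y c)) := by
  obtain rfl | hne := eq_or_ne y c
  · simpa using
      isJohnCurve_const (ball_infDist_compl_subset (mem_ball_self (by simpa using hyc)))
  set T := dist y c
  have hT : 0 < T := dist_pos.2 hne
  have hclose : ∀ t ∈ Icc 0 T, dist (AffineMap.lineMap y c (t / T)) c ≤ T := fun t ht => by
    rw [dist_lineMap_right, Real.norm_eq_abs, abs_of_nonneg]
    · exact mul_le_of_le_one_left hT.le (by linarith [div_nonneg ht.1 hT.le])
    · linarith [(div_le_one hT).2 ht.2]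
  refine ⟨LipschitzOnWith.of_dist_le_mul fun a _ b _ => ?_, fun t ht => ?_, by simp,
    by rw [div_self hT.ne', AffineMap.lineMap_apply_one], fun t ht => ?_⟩
  · rw [dist_lineMap_lineMap, Real.dist_eq, ← sub_div, abs_div, abs_of_pos hT,
      div_mul_cancel₀ _ hT.ne', Real.coe_toNNReal _ (by linarith), ← Real.dist_eq]
    exact le_mul_of_one_le_left dist_nonneg hL
  · exact ball_infDist_compl_subset (mem_ball.2 ((hclose t ht).trans_lt (by linarith)))
  · calc t / L ≤ t := div_le_self ht.1 hL
      _ ≤ infDist c Uᶜ - T := by linarith [ht.2]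
      _ ≤ infDist (AffineMap.lineMap y c (t / T)) Uᶜ := by
        linarith [hclose t ht, dist_comm c (AffineMap.lineMap y c (t / T)),
          infDist_le_infDist_add_dist (x := c) (y := AffineMap.lineMap y c (t / T)) (s := Uᶜ)]

end

theorem stmt_6 (d : ℕ) :
    -- a John constant for the union, depending only on L₁, L₂, d_γ, the Lipschitz
    -- constant (and hence length) of γ, and the diameters of ω₁, ω₂
    ∃ F : ℝ → ℝ → ℝ → ℝ → ℝ → ℝ → ℝ,
      ∀ (ω₁ ω₂ : Set (EuclideanSpace ℝ (Fin d)))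
        (x₁ x₂ : EuclideanSpace ℝ (Fin d)) (L₁ L₂ dγ Kγ : ℝ),
        IsOpen ω₁ → IsOpen ω₂ →
        Bornology.IsBounded ω₁ → Bornology.IsBounded ω₂ →
        0 < L₁ → 0 < L₂ → 0 < dγ →
        IsJohnDomain ω₁ x₁ L₁ → IsJohnDomain ω₂ x₂ L₂ →
        (ω₁ ∩ ω₂).Nonempty →
        ∀ γ : ℝ → EuclideanSpace ℝ (Fin d),
          LipschitzOnWith (Real.toNNReal Kγ) γ (Set.Icc 0 1) →
          γ 0 = x₁ → γ 1 = x₂ →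
          (∀ t ∈ Set.Icc (0 : ℝ) 1, γ t ∈ ω₁ ∪ ω₂) →
          (∀ t ∈ Set.Icc (0 : ℝ) 1, dγ ≤ Metric.infDist (γ t) (frontier (ω₁ ∪ ω₂))) →
          ∃ c ∈ ω₁ ∪ ω₂, IsJohnDomain (ω₁ ∪ ω₂) c
            (F L₁ L₂ dγ Kγ (EMetric.diam ω₁).toReal (EMetric.diam ω₂).toReal) := by
  refine ⟨fun L₁ L₂ dγ Kγ D₁ _ => L₁ + L₂ + 1 + 2 * max L₁ 1 * (D₁ + max Kγ 1) / dγ, ?_⟩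
  intro ω₁ ω₂ x₁ x₂ L₁ L₂ dγ Kγ _ _ hB₁ hB₂ hL₁ hL₂ hdγ hJ₁ hJ₂ _ γ hγ hγ0 hγ1 hγU hγdγ
  show ∃ c ∈ ω₁ ∪ ω₂, IsJohnDomain _ c (L₁ + L₂ + 1 + 2 * max L₁ 1 * (diam ω₁ + max Kγ 1) / dγ)
  rw [isJohnDomain_iff] at hJ₁ hJ₂
  refine ⟨x₂, Or.inr hJ₂.1, isJohnDomain_iff.2 ⟨Or.inr hJ₂.1, fun y hy => ?_⟩⟩
  rcases subsingleton_or_nontrivial (EuclideanSpace ℝ (Fin d)) with _ | _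
  · obtain rfl := Subsingleton.elim y x₂
    exact ⟨_, isJohnCurve_const hy⟩
  have hU : (ω₁ ∪ ω₂)ᶜ.Nonempty :=
    nonempty_compl.2 fun h => NormedSpace.unbounded_univ ℝ _ (h ▸ hB₁.union hB₂)
  have hγdeep : ∀ u ∈ Icc (0 : ℝ) 1, dγ ≤ infDist (γ u) (ω₁ ∪ ω₂)ᶜ := fun u hu => by
    rw [← infDist_frontier_eq_infDist_compl (hγU u hu)]
    exact hγdγ u hu
  have hrest_nonneg : 0 ≤ 2 * max L₁ 1 * (diam ω₁ + max Kγ 1) / dγ := by positivity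
  rcases hy with hy₁ | hy₂
  · rcases lt_or_ge (2 * dist y x₂) dγ with hnear | hfar
    · exact ⟨_, isJohnCurve_lineMap (hnear.trans_le (hγ1 ▸ hγdeep 1 ⟨zero_le_one, le_rfl⟩))
        (by linarith)⟩
    obtain ⟨ρ, hρ⟩ := hJ₁.2 y hy₁
    have hrest : 2 * max L₁ 1 * (dist y x₁ + max Kγ 1) / dγ ≤
        2 * max L₁ 1 * (diam ω₁ + max Kγ 1) / dγ := by
      gcongr
      exact dist_le_diam_of_mem hB₁ hy₁ hJ₁.1
    exact hρ.exists_trans_deep_path (K := max Kγ 1) subset_union_left hU hL₁ (by positivity)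
      (hγ.weaken (Real.toNNReal_le_toNNReal (le_max_left _ _))) hγ0 hγ1 hγU hγdeep hdγ hfar
      (by linarith) (by linarith)
  · obtain ⟨ρ, hρ⟩ := hJ₂.2 y hy₂
    exact ⟨ρ, hρ.mono subset_union_right hU hL₂ (by linarith)⟩
end

section
/- Let $X$ be a real random variable on a probability space, $\lambda \ge 0$, and define $\phi(\lambda) = \mathbb{E}[e^{\lambda X}]$, $\psi(\lambda) = \log\phi(\lambda)$. Suppose that $X$ is bounded and that there exist constants $K, L > 0$ such that for all $\lambda > 0$, $\lambda\phi'(\lambda) - \phi(\lambda)\log\phi(\lambda) \le K \lambda^2 e^{\lambda L} \phi(\lambda)$. Then for all $\lambda > 0$, $\log \mathbb{E}[\exp(\lambda(X - \mathbb{E}[X]))] \le \frac{K}{L}\lambda(e^{\lambda L} - 1)$. -/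
/-!
Write `ψ = log φ` for the cumulant generating function. Dividing the entropy bound by `φ(λ)`
turns it into `λ ψ'(λ) - ψ(λ) ≤ K λ² e^{λL}`, i.e. `(ψ(λ)/λ)' ≤ K e^{λL}`. Since `ψ(0) = 0`,
`ψ(λ)/λ → ψ'(0) = 𝔼[X]` as `λ → 0⁺`, so integrating over `(0, λ]` gives
`ψ(λ)/λ ≤ 𝔼[X] + (K/L)(e^{λL} - 1)`, and `ψ(λ) - λ 𝔼[X]` is the left-hand side of the claim.
-/

open MeasureTheory ProbabilityTheory Filter Set Topology Real

section Herbst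

variable {ψ ψ' g g' : ℝ → ℝ}

lemma antitoneOn_div_sub_of_mul_deriv_sub_le
    (hψ : ∀ x > 0, HasDerivAt ψ (ψ' x) x) (hg : ∀ x > 0, HasDerivAt g (g' x) x)
    (hle : ∀ x > 0, x * ψ' x - ψ x ≤ x ^ 2 * g' x) :
    AntitoneOn (fun x => ψ x / x - g x) (Ioi 0) := by
  have hderiv : ∀ x > 0,
      HasDerivAt (fun x => ψ x / x - g x) ((ψ' x * x - ψ x) / x ^ 2 - g' x) x := fun x hx =>
    (((hψ x hx).div (hasDerivAt_id' x) hx.ne').sub (hg x hx)).congr_deriv (by ring)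
  refine antitoneOn_of_deriv_nonpos (convex_Ioi 0)
    (fun x hx => (hderiv x hx).continuousAt.continuousWithinAt) ?_ ?_ <;> rw [interior_Ioi]
  · exact fun x hx => (hderiv x hx).differentiableAt.differentiableWithinAt
  · intro x hx
    rw [(hderiv x hx).deriv, sub_nonpos, div_le_iff₀ (pow_pos hx 2)]
    linarith [hle x hx]

theorem div_le_add_sub_of_mul_deriv_sub_le {m : ℝ} (hψ0 : ψ 0 = 0) (hψm : HasDerivAt ψ m 0)
    (hψ : ∀ x > 0, HasDerivAt ψ (ψ' x) x) (hg : ∀ x > 0, HasDerivAt g (g' x) x)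
    (hg0 : ContinuousWithinAt g (Ioi 0) 0) (hle : ∀ x > 0, x * ψ' x - ψ x ≤ x ^ 2 * g' x)
    {t : ℝ} (ht : 0 < t) :
    ψ t / t ≤ m + (g t - g 0) := by
  have hlim : Tendsto (fun x => ψ x / x - g x) (𝓝[>] 0) (𝓝 (m - g 0)) := by
    refine (((hasDerivAt_iff_tendsto_slope.mp hψm).mono_left (nhdsGT_le_nhdsNE 0)).congr
      fun x => ?_).sub hg0
    simp [slope_def_field, hψ0]
  have hanti := antitoneOn_div_sub_of_mul_deriv_sub_le hψ hg hle
  have : ψ t / t - g t ≤ m - g 0 := ge_of_tendsto hlim <| by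
    filter_upwards [Ioo_mem_nhdsGT ht] with x hx
    exact hanti hx.1 ht hx.2.le
  linarith

lemma mul_div_sub_log_le {φ d t c : ℝ} (hφ : 0 < φ) (h : t * d - φ * log φ ≤ c * φ) :
    t * (d / φ) - log φ ≤ c := by
  rw [show t * (d / φ) - log φ = (t * d - φ * log φ) / φ by field_simp, div_le_iff₀ hφ]
  exact h

end Herbst

section BoundedMGF

variable {Ω : Type*} [MeasurableSpace Ω] {μ : Measure Ω} {X : Ω → ℝ}

lemma integrable_exp_mul_of_abs_le_const [IsFiniteMeasure μ] (hX : Measurable X) {M : ℝ}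
    (hbd : ∀ ω, |X ω| ≤ M) (t : ℝ) : Integrable (fun ω => exp (t * X ω)) μ := by
  refine Integrable.of_bound (hX.const_mul t).exp.aestronglyMeasurable (exp (|t| * M))
    (Eventually.of_forall fun ω => ?_)
  rw [norm_eq_abs, abs_exp, exp_le_exp]
  calc t * X ω ≤ |t * X ω| := le_abs_self _
    _ = |t| * |X ω| := abs_mul _ _
    _ ≤ |t| * M := mul_le_mul_of_nonneg_left (hbd ω) (abs_nonneg t)

lemma cgf_sub_const [IsProbabilityMeasure μ] {t : ℝ}
    (h : Integrable (fun ω => exp (t * X ω)) μ) (c : ℝ) :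
    cgf (fun ω => X ω - c) μ t = cgf X μ t - t * c := by
  simp only [cgf, sub_eq_add_neg, mgf_add_const, log_mul (mgf_pos h).ne' (exp_pos _).ne',
    log_exp, mul_neg]

end BoundedMGF

theorem stmt_11_general {Ω : Type*} [MeasurableSpace Ω] (μ : Measure Ω)
    [IsProbabilityMeasure μ] (X : Ω → ℝ) (hX : Measurable X)
    (Mb : ℝ) (hbd : ∀ ω, |X ω| ≤ Mb)
    (K L : ℝ) (hL : 0 < L)
    (hent : ∀ lam : ℝ, 0 < lam →
      lam * deriv (fun l : ℝ => ∫ ω, Real.exp (l * X ω) ∂μ) lam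
        - (∫ ω, Real.exp (lam * X ω) ∂μ) * Real.log (∫ ω, Real.exp (lam * X ω) ∂μ)
        ≤ K * lam ^ 2 * Real.exp (lam * L) * (∫ ω, Real.exp (lam * X ω) ∂μ)) :
    ∀ lam : ℝ, 0 < lam →
      Real.log (∫ ω, Real.exp (lam * (X ω - ∫ ω', X ω' ∂μ)) ∂μ)
        ≤ (K / L) * lam * (Real.exp (lam * L) - 1) := by
  intro t ht
  have hint := integrable_exp_mul_of_abs_le_const (μ := μ) hX hbd
  have hinterior (s : ℝ) : s ∈ interior (integrableExpSet X μ) := by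
    simp [integrableExpSet, hint]
  have hcgf (s : ℝ) : HasDerivAt (cgf X μ) (deriv (mgf X μ) s / mgf X μ s) s :=
    (differentiableAt_mgf (hinterior s)).hasDerivAt.log (mgf_pos (hint s)).ne'
  have hg (s : ℝ) : HasDerivAt (fun s => K / L * (exp (s * L) - 1)) (K * exp (s * L)) s := by
    refine ((((hasDerivAt_mul_const L).exp).sub_const 1).const_mul (K / L)).congr_deriv ?_
    field_simp
  have hle : ∀ s > 0,
      s * (deriv (mgf X μ) s / mgf X μ s) - cgf X μ s ≤ s ^ 2 * (K * exp (s * L)) :=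
    fun s hs => mul_div_sub_log_le (mgf_pos (hint s)) ((hent s hs).trans_eq (by rw [mgf]; ring))
  have key := div_le_add_sub_of_mul_deriv_sub_le cgf_zero
    (by simpa [deriv_mgf_zero (hinterior 0)] using hcgf 0) (fun s _ => hcgf s) (fun s _ => hg s)
    (hg 0).continuousAt.continuousWithinAt hle ht
  change cgf (fun ω => X ω - μ[X]) μ t ≤ _
  rw [cgf_sub_const (hint t)]
  rw [zero_mul, exp_zero, sub_self, mul_zero, sub_zero, div_le_iff₀ ht] at key
  linarith

theorem stmt_11 {Ω : Type*} [MeasurableSpace Ω] (μ : Measure Ω)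
    [IsProbabilityMeasure μ] (X : Ω → ℝ) (hX : Measurable X)
    (Mb : ℝ) (hbd : ∀ ω, |X ω| ≤ Mb)
    (K L : ℝ) (hK : 0 < K) (hL : 0 < L)
    (hent : ∀ lam : ℝ, 0 < lam →
      lam * deriv (fun l : ℝ => ∫ ω, Real.exp (l * X ω) ∂μ) lam
        - (∫ ω, Real.exp (lam * X ω) ∂μ) * Real.log (∫ ω, Real.exp (lam * X ω) ∂μ)
        ≤ K * lam ^ 2 * Real.exp (lam * L) * (∫ ω, Real.exp (lam * X ω) ∂μ)) :
    ∀ lam : ℝ, 0 < lam →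
      Real.log (∫ ω, Real.exp (lam * (X ω - ∫ ω', X ω' ∂μ)) ∂μ)
        ≤ (K / L) * lam * (Real.exp (lam * L) - 1) :=
  stmt_11_general μ X hX Mb hbd K L hL hent
end

section
/- Let $x, z \in \mathbb{R}^3$ with $r_x := \sqrt{x_2^2+x_3^2} < 1$, let $z$ lie on the unit cylinder $\Gamma = \{r = 1\}$, and let $c > 0$, $0 < \varepsilon \le 1$. Then there is a constant $C$ depending only on $c$ such that $\int_{\Gamma} \frac{\varepsilon^4 (1-r_x)^2 e^{-2c|x_1 - z_1|}}{|x - z|^6}\, d\Gamma_z \le \frac{C\varepsilon^4}{(1-r_x)^2}$, where $d\Gamma_z$ is the surface measure on $\Gamma$. -/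
/-! Write `(x₁, x₂) = r (cos θ₀, sin θ₀)`, `d = 1 - r` and `t = x₀ - s`. The squared distance from
`x` to `(s, cos θ, sin θ)` is `t² + d² + 2r(1 - cos(θ - θ₀))`; it dominates both `A = t² + d²` and
`(A + (1 - cos(θ - θ₀))/2)/2`, so its cube dominates `A² (A + (1 - cos(θ - θ₀))/2) / 2`. Since
`1 - cos ψ ≥ 2ψ²/π²` on `[-π, π]`, the angular integral of `(A + (1 - cos ψ)/2)⁻¹` is at most
`∫ (A + ψ²/π²)⁻¹ dψ = π²/√A`; hence the inner integral is `O(d²/A^{5/2}) = O(1/(d A))`, and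
`∫ (t² + d²)⁻¹ dt = π/d` gives `O(1/d²)`. The exponential factor is just bounded by `1`. -/

open MeasureTheory Real Set

lemma inv_sq_add_sq_eq_mul_inv_one_add_sq {b : ℝ} (hb : b ≠ 0) (t : ℝ) :
    (t ^ 2 + b ^ 2)⁻¹ = b⁻¹ ^ 2 * (1 + (b⁻¹ * t) ^ 2)⁻¹ := by
  field_simp
  ring

lemma integrable_inv_sq_add_sq {b : ℝ} (hb : b ≠ 0) :
    Integrable fun t : ℝ => (t ^ 2 + b ^ 2)⁻¹ := by
  simp_rw [inv_sq_add_sq_eq_mul_inv_one_add_sq hb]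
  exact ((integrable_comp_mul_left_iff (fun y : ℝ => (1 + y ^ 2)⁻¹)
    (inv_ne_zero hb)).2 integrable_inv_one_add_sq).const_mul _

lemma integral_univ_inv_sq_add_sq {b : ℝ} (hb : 0 < b) :
    ∫ t : ℝ, (t ^ 2 + b ^ 2)⁻¹ = π / b := by
  simp_rw [inv_sq_add_sq_eq_mul_inv_one_add_sq hb.ne']
  rw [integral_const_mul, Measure.integral_comp_mul_left (fun y : ℝ => (1 + y ^ 2)⁻¹),
    integral_univ_inv_one_add_sq, inv_inv, abs_of_pos hb, smul_eq_mul]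
  field_simp

lemma Function.Periodic.setIntegral_Ioo_comp_sub {f : ℝ → ℝ} {T : ℝ}
    (hf : Function.Periodic f T) (hT : 0 ≤ T) (a θ₀ : ℝ) :
    ∫ θ in Ioo 0 T, f (θ - θ₀) = ∫ ψ in a..a + T, f ψ := by
  rw [← integral_Ioc_eq_integral_Ioo, ← intervalIntegral.integral_of_le hT,
    intervalIntegral.integral_comp_sub_right, zero_sub, sub_eq_neg_add,
    hf.intervalIntegral_add_eq]

lemma integral_Ioo_inv_add_one_sub_cos_le {A : ℝ} (hA : 0 < A) (θ₀ : ℝ) :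
    ∫ θ in Ioo 0 (2 * π), (A + (1 - cos (θ - θ₀)) / 2)⁻¹ ≤ π ^ 2 / √A := by
  have hb : 0 < π * √A := by positivity
  have hscale : ∀ ψ, (A + ψ ^ 2 / π ^ 2)⁻¹ = π ^ 2 * (ψ ^ 2 + (π * √A) ^ 2)⁻¹ := fun ψ => by
    rw [mul_pow, sq_sqrt hA.le]
    field_simp
    ring
  have hint : Integrable fun ψ : ℝ => (A + ψ ^ 2 / π ^ 2)⁻¹ := by
    simp_rw [hscale]
    exact (integrable_inv_sq_add_sq hb.ne').const_mul _
  have hper : Function.Periodic (fun ψ => (A + (1 - cos ψ) / 2)⁻¹) (2 * π) := fun ψ => by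
    simp only [cos_add_two_pi]
  calc ∫ θ in Ioo 0 (2 * π), (A + (1 - cos (θ - θ₀)) / 2)⁻¹
      = ∫ ψ in -π..-π + 2 * π, (A + (1 - cos ψ) / 2)⁻¹ :=
        hper.setIntegral_Ioo_comp_sub (by positivity) _ _
    _ ≤ ∫ ψ in -π..-π + 2 * π, (A + ψ ^ 2 / π ^ 2)⁻¹ := by
        refine intervalIntegral.integral_mono_on (by linarith [pi_pos]) ?_
          hint.intervalIntegrable fun ψ hψ => ?_
        · refine (Continuous.inv₀ (by fun_prop) fun ψ => ?_).intervalIntegrable _ _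
          nlinarith [cos_le_one ψ]
        · have hcos := cos_le_one_sub_mul_cos_sq (abs_le.2 ⟨hψ.1, by linarith [hψ.2]⟩)
          apply inv_anti₀ (by positivity)
          linarith [show 2 / π ^ 2 * ψ ^ 2 = 2 * (ψ ^ 2 / π ^ 2) by ring]
    _ ≤ ∫ ψ, (A + ψ ^ 2 / π ^ 2)⁻¹ := by
        rw [intervalIntegral.integral_of_le (by linarith [pi_pos])]
        exact setIntegral_le_integral hint (.of_forall fun ψ => by positivity)
    _ = π ^ 2 / √A := by
        simp_rw [hscale]
        rw [integral_const_mul, integral_univ_inv_sq_add_sq hb]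
        field_simp

lemma exists_eq_sqrt_mul_cos_and_eq_sqrt_mul_sin (a b : ℝ) :
    ∃ θ : ℝ, a = √(a ^ 2 + b ^ 2) * cos θ ∧ b = √(a ^ 2 + b ^ 2) * sin θ := by
  have hnorm : ‖(⟨a, b⟩ : ℂ)‖ = √(a ^ 2 + b ^ 2) := by
    rw [Complex.norm_def, Complex.normSq_mk, sq, sq]
  refine ⟨Complex.arg ⟨a, b⟩, ?_, ?_⟩
  · rw [← hnorm, Complex.norm_mul_cos_arg]
  · rw [← hnorm, Complex.norm_mul_sin_arg]

lemma sq_dist_unit_circle (r θ₀ θ : ℝ) :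
    (r * cos θ₀ - cos θ) ^ 2 + (r * sin θ₀ - sin θ) ^ 2
      = (1 - r) ^ 2 + 2 * r * (1 - cos (θ - θ₀)) := by
  rw [cos_sub]
  linear_combination (r ^ 2) * sin_sq_add_cos_sq θ₀ + sin_sq_add_cos_sq θ

lemma one_sub_cos_div_two_le {r : ℝ} (hr : 0 ≤ r) (ψ : ℝ) :
    (1 - cos ψ) / 2 ≤ (1 - r) ^ 2 + 2 * r * (1 - cos ψ) := by
  have h₁ : 0 ≤ 1 + cos ψ := by linarith [neg_one_le_cos ψ]
  have h₂ : 0 ≤ 1 - cos ψ := by linarith [cos_le_one ψ]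
  -- the difference is affine in `cos ψ`: interpolate between its values at `cos ψ = ±1`
  nlinarith [mul_nonneg h₁ (sq_nonneg (1 - r)),
    mul_nonneg h₂ (mul_nonneg hr (by linarith : 0 ≤ r + 2))]

lemma sq_div_pow_three_le {d t q h : ℝ} (hd : 0 < d) (hdq : d ^ 2 ≤ q) (hh : 0 ≤ h)
    (hhq : h ≤ q) :
    d ^ 2 / (t ^ 2 + q) ^ 3 ≤ 2 * d ^ 2 / (t ^ 2 + d ^ 2) ^ 2 * (t ^ 2 + d ^ 2 + h)⁻¹ := by
  have hA : 0 < t ^ 2 + d ^ 2 := by positivity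
  have hAD : t ^ 2 + d ^ 2 ≤ t ^ 2 + q := by linarith
  have hD : 0 < t ^ 2 + q := by nlinarith
  have hAhD : t ^ 2 + d ^ 2 + h ≤ 2 * (t ^ 2 + q) := by nlinarith
  rw [← div_eq_mul_inv, div_div, div_le_div_iff₀ (pow_pos hD 3) (by positivity)]
  have := mul_le_mul (pow_le_pow_left₀ hA.le hAD 2) hAhD (by positivity) (by positivity)
  nlinarith [mul_le_mul_of_nonneg_left this (sq_nonneg d)]

lemma setIntegral_sq_div_dist_sq_pow_three_le {r : ℝ} (hr0 : 0 ≤ r) (hr1 : r < 1)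
    (t θ₀ : ℝ) :
    ∫ θ in Ioo 0 (2 * π),
        (1 - r) ^ 2 / (t ^ 2 + (r * cos θ₀ - cos θ) ^ 2 + (r * sin θ₀ - sin θ) ^ 2) ^ 3
      ≤ 2 * π ^ 2 / (1 - r) * (t ^ 2 + (1 - r) ^ 2)⁻¹ := by
  set d := 1 - r
  set A := t ^ 2 + d ^ 2
  have hd : 0 < d := by simp only [d]; linarith
  have hA : 0 < A := by positivity
  have hq : ∀ θ, d ^ 2 ≤ (r * cos θ₀ - cos θ) ^ 2 + (r * sin θ₀ - sin θ) ^ 2 := fun θ => by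
    rw [sq_dist_unit_circle]
    nlinarith [cos_le_one (θ - θ₀)]
  have hh : ∀ θ, 0 ≤ (1 - cos (θ - θ₀)) / 2 := fun θ => by linarith [cos_le_one (θ - θ₀)]
  have hD : ∀ θ, 0 < t ^ 2 + (r * cos θ₀ - cos θ) ^ 2 + (r * sin θ₀ - sin θ) ^ 2 :=
    fun θ => by nlinarith [hq θ, sq_nonneg t]
  calc _ ≤ ∫ θ in Ioo 0 (2 * π), 2 * d ^ 2 / A ^ 2 * (A + (1 - cos (θ - θ₀)) / 2)⁻¹ := by
        refine setIntegral_mono_on ?_ ?_ measurableSet_Ioo fun θ _ => ?_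
        · exact ((Continuous.div continuous_const (by fun_prop)
            fun θ => (pow_pos (hD θ) 3).ne').integrableOn_Icc).mono_set Ioo_subset_Icc_self
        · exact ((continuous_const.mul (Continuous.inv₀ (by fun_prop)
            fun θ => (add_pos_of_pos_of_nonneg hA (hh θ)).ne')).integrableOn_Icc).mono_set
              Ioo_subset_Icc_self
        · rw [add_assoc]
          refine sq_div_pow_three_le hd (hq θ) (hh θ) ?_
          rw [sq_dist_unit_circle]
          exact one_sub_cos_div_two_le hr0 _
    _ = 2 * d ^ 2 / A ^ 2 * ∫ θ in Ioo 0 (2 * π), (A + (1 - cos (θ - θ₀)) / 2)⁻¹ :=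
        integral_const_mul _ _
    _ ≤ 2 * d ^ 2 / A ^ 2 * (π ^ 2 / √A) := by
        gcongr
        exact integral_Ioo_inv_add_one_sub_cos_le hA θ₀
    _ ≤ 2 * π ^ 2 / d * A⁻¹ := by
        have hdA : d ≤ √A := le_sqrt_of_sq_le (by simp only [A]; linarith [sq_nonneg t])
        have hd3 : d ^ 3 ≤ A * √A := by
          calc d ^ 3 ≤ √A ^ 3 := pow_le_pow_left₀ hd.le hdA 3
            _ = A * √A := by rw [pow_succ, sq_sqrt hA.le]
        rw [← div_eq_mul_inv, div_div, div_mul_div_comm,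
          div_le_div_iff₀ (by positivity) (by positivity)]
        nlinarith [mul_le_mul_of_nonneg_left hd3 (by positivity : (0 : ℝ) ≤ 2 * π ^ 2 * A)]

lemma integral_cylinder_kernel_le {c : ℝ} (hc : 0 ≤ c) {r : ℝ} (hr0 : 0 ≤ r) (hr1 : r < 1)
    (ε x₀ θ₀ : ℝ) :
    ∫ s, ∫ θ in Ioo 0 (2 * π), ε ^ 4 * (1 - r) ^ 2 * exp (-2 * c * |x₀ - s|)
        / ((x₀ - s) ^ 2 + (r * cos θ₀ - cos θ) ^ 2 + (r * sin θ₀ - sin θ) ^ 2) ^ 3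
      ≤ 2 * π ^ 3 * ε ^ 4 / (1 - r) ^ 2 := by
  have hd : 0 < 1 - r := by linarith
  have hfactor : ∀ s, (∫ θ in Ioo 0 (2 * π), ε ^ 4 * (1 - r) ^ 2 * exp (-2 * c * |x₀ - s|)
        / ((x₀ - s) ^ 2 + (r * cos θ₀ - cos θ) ^ 2 + (r * sin θ₀ - sin θ) ^ 2) ^ 3)
      = ε ^ 4 * exp (-2 * c * |x₀ - s|) * ∫ θ in Ioo 0 (2 * π), (1 - r) ^ 2
        / ((x₀ - s) ^ 2 + (r * cos θ₀ - cos θ) ^ 2 + (r * sin θ₀ - sin θ) ^ 2) ^ 3 :=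
    fun s => by
      rw [← integral_const_mul]
      congr 1 with θ
      ring
  have hexp : ∀ s, exp (-2 * c * |x₀ - s|) ≤ 1 := fun s =>
    exp_le_one_iff.2 (by nlinarith [abs_nonneg (x₀ - s)])
  set B : ℝ → ℝ := fun s => 2 * π ^ 2 / (1 - r) * ((x₀ - s) ^ 2 + (1 - r) ^ 2)⁻¹
  have hB : Integrable fun s => ε ^ 4 * B s :=
    (((integrable_inv_sq_add_sq hd.ne').comp_sub_left x₀).const_mul _).const_mul _
  calc _ ≤ ∫ s, ε ^ 4 * B s := by
        refine integral_mono_of_nonneg (.of_forall fun s => ?_) hB (.of_forall fun s => ?_)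
        · exact setIntegral_nonneg measurableSet_Ioo fun θ _ => by positivity
        · dsimp only
          rw [hfactor]
          calc _ ≤ ε ^ 4 * exp (-2 * c * |x₀ - s|) * B s := by
                gcongr
                exact setIntegral_sq_div_dist_sq_pow_three_le hr0 hr1 _ _
            _ ≤ ε ^ 4 * B s := by
                rw [mul_assoc]
                gcongr ε ^ 4 * ?_
                exact mul_le_of_le_one_left (by positivity) (hexp s)
    _ = 2 * π ^ 3 * ε ^ 4 / (1 - r) ^ 2 := by
        simp only [B]
        rw [integral_const_mul, integral_const_mul,
          integral_sub_left_eq_self (fun t => (t ^ 2 + (1 - r) ^ 2)⁻¹),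
          integral_univ_inv_sq_add_sq hd]
        field_simp

theorem stmt_16 (c : ℝ) (hc : 0 < c) :
    ∃ C > (0 : ℝ), ∀ ε : ℝ, 0 < ε → ε ≤ 1 →
      ∀ x : EuclideanSpace ℝ (Fin 3),
        Real.sqrt ((x 1) ^ 2 + (x 2) ^ 2) < 1 →
        -- surface integral over Γ = {r = 1}, parametrized by (s, θ) ↦ (s, cos θ, sin θ)
        (∫ s : ℝ, ∫ θ in Set.Ioo (0 : ℝ) (2 * Real.pi),
            ε ^ 4 * (1 - Real.sqrt ((x 1) ^ 2 + (x 2) ^ 2)) ^ 2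
              * Real.exp (-2 * c * |x 0 - s|)
              / ((x 0 - s) ^ 2 + (x 1 - Real.cos θ) ^ 2 + (x 2 - Real.sin θ) ^ 2) ^ 3)
          ≤ C * ε ^ 4 / (1 - Real.sqrt ((x 1) ^ 2 + (x 2) ^ 2)) ^ 2 := by
  refine ⟨2 * π ^ 3, by positivity, fun ε _ _ x hx => ?_⟩
  obtain ⟨θ₀, hx₁, hx₂⟩ := exists_eq_sqrt_mul_cos_and_eq_sqrt_mul_sin (x 1) (x 2)
  have := integral_cylinder_kernel_le hc.le (sqrt_nonneg _) hx ε (x 0) θ₀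
  rwa [← hx₁, ← hx₂] at this
end

section
/- Let $c > 0$ and $0 < \varepsilon \le 1$. Then there is a constant $C$ depending only on $c$ such that for every $z \in \mathbb{R}^3$ on the unit cylinder $\Gamma = \{r = 1\}$, $\int_{D'} \frac{\varepsilon^6 (1-r_x)^2 e^{-2c|x - z|}}{|x - z|^6}\, dx \le C\,\varepsilon^5\, e^{-2c\,\mathrm{dist}(z, D')}$, where $D' = \{x : \sqrt{x_2^2 + x_3^2} < 1 - 8\varepsilon,\ 0 < x_1 < 1\}$. -/
/-!
For `x ∈ D'` and `z ∈ Γ` the cylindrical radius is `1`-Lipschitz, so `1 - r_x ≤ |x - z|`; moreover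
`|x - z| > 8ε` on `D'`. The integrand is therefore at most
`ε⁶ e^{-2c dist(z, D')} max(|x - z|, 8ε)⁻⁴`, whose integral over all of `ℝ³` is, by scaling,
`(8ε)³⁻⁴` times the integral of `max(|y|, 1)⁻⁴`, finite since `4 > 3`. This gives `ε⁵`.
-/

open MeasureTheory Module Metric

section Kernel

variable {E : Type*} [NormedAddCommGroup E] [NormedSpace ℝ E] [FiniteDimensional ℝ E]
  [MeasurableSpace E] [BorelSpace E] (μ : Measure E) [μ.IsAddHaarMeasure]

lemma integrable_inv_max_norm_pow {n : ℕ} (hn : finrank ℝ E < n) {a : ℝ} (ha : 0 < a) :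
    Integrable (fun y : E => (max ‖y‖ a ^ n)⁻¹) μ := by
  have hdom : Integrable (fun y : E => (1 + a⁻¹) ^ n * (1 + ‖y‖) ^ (-(n : ℝ))) μ :=
    (integrable_one_add_norm (by exact_mod_cast hn)).const_mul _
  refine hdom.mono' (by fun_prop) (Filter.Eventually.of_forall fun y => ?_)
  have hmax : 0 < max ‖y‖ a := lt_max_of_lt_right ha
  have hle : 1 + ‖y‖ ≤ (1 + a⁻¹) * max ‖y‖ a := by
    have hone : 1 ≤ a⁻¹ * max ‖y‖ a := by
      rw [inv_mul_eq_div, le_div_iff₀ ha, one_mul]; exact le_max_right _ _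
    nlinarith [le_max_left ‖y‖ a]
  rw [Real.norm_of_nonneg (by positivity), Real.rpow_neg (by positivity), Real.rpow_natCast,
    ← div_eq_mul_inv, le_div_iff₀ (by positivity), ← div_eq_inv_mul,
    div_le_iff₀ (by positivity), ← mul_pow]
  exact pow_le_pow_left₀ (by positivity) hle n

lemma integral_inv_max_norm_pow (n : ℕ) {a : ℝ} (ha : 0 < a) :
    ∫ y, (max ‖y‖ a ^ n)⁻¹ ∂μ = a ^ finrank ℝ E / a ^ n * ∫ y : E, (max ‖y‖ 1 ^ n)⁻¹ ∂μ := by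
  have hscale : ∀ y : E, (max ‖y‖ a ^ n)⁻¹ = (a ^ n)⁻¹ * (max ‖a⁻¹ • y‖ 1 ^ n)⁻¹ := by
    intro y
    rw [norm_smul, Real.norm_of_nonneg (inv_nonneg.2 ha.le), ← mul_inv, ← mul_pow,
      mul_max_of_nonneg _ _ ha.le, mul_inv_cancel_left₀ ha.ne', mul_one]
  simp_rw [hscale]
  rw [integral_const_mul, Measure.integral_comp_inv_smul_of_nonneg μ
    (fun y : E => (max ‖y‖ 1 ^ n)⁻¹) ha.le, smul_eq_mul]
  ring

end Kernel

noncomputable def cylRadius (x : EuclideanSpace ℝ (Fin 3)) : ℝ := √(x 1 ^ 2 + x 2 ^ 2)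

def innerSlab (ε : ℝ) : Set (EuclideanSpace ℝ (Fin 3)) :=
  {x | cylRadius x < 1 - 8 * ε ∧ 0 < x 0 ∧ x 0 < 1}

lemma cylRadius_sub_cylRadius_le_dist (x z : EuclideanSpace ℝ (Fin 3)) :
    cylRadius z - cylRadius x ≤ dist x z := by
  have hplanar := norm_sub_norm_le !₂[z 1, z 2] !₂[x 1, x 2]
  simp only [EuclideanSpace.norm_eq, Fin.sum_univ_two, ← WithLp.toLp_sub] at hplanar
  simp only [Pi.sub_apply, Matrix.cons_val_zero, Matrix.cons_val_one, Real.norm_eq_abs,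
    sq_abs] at hplanar
  have hproj : √((z 1 - x 1) ^ 2 + (z 2 - x 2) ^ 2) ≤ dist x z := by
    rw [EuclideanSpace.dist_eq, Fin.sum_univ_three]
    apply Real.sqrt_le_sqrt
    simp only [Real.dist_eq, sq_abs]
    nlinarith [sq_nonneg (x 0 - z 0)]
  unfold cylRadius
  linarith

lemma measurableSet_innerSlab (ε : ℝ) : MeasurableSet (innerSlab ε) := by
  have hr : Continuous cylRadius := by unfold cylRadius; fun_prop
  have h0 : Continuous fun x : EuclideanSpace ℝ (Fin 3) => x 0 := by fun_prop
  exact ((isOpen_lt hr continuous_const).inter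
    ((isOpen_lt continuous_const h0).inter (isOpen_lt h0 continuous_const))).measurableSet

lemma slab_integrand_le {c ε : ℝ} (hc : 0 ≤ c) (hε : 0 < ε) {x z : EuclideanSpace ℝ (Fin 3)}
    (hz : cylRadius z = 1) (hx : x ∈ innerSlab ε) :
    ε ^ 6 * (1 - cylRadius x) ^ 2 * Real.exp (-2 * c * dist x z) / dist x z ^ 6
      ≤ Real.exp (-2 * c * infDist z (innerSlab ε)) * (ε ^ 6 * (max ‖x - z‖ (8 * ε) ^ 4)⁻¹) := by
  have hrad : 1 - cylRadius x ≤ dist x z := hz ▸ cylRadius_sub_cylRadius_le_dist x z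
  have hfar : 8 * ε < dist x z := by linarith [hx.1]
  have hinf : infDist z (innerSlab ε) ≤ dist x z := dist_comm x z ▸ infDist_le_dist_of_mem hx
  rw [← dist_eq_norm, max_eq_left hfar.le]
  calc ε ^ 6 * (1 - cylRadius x) ^ 2 * Real.exp (-2 * c * dist x z) / dist x z ^ 6
      ≤ ε ^ 6 * dist x z ^ 2 * Real.exp (-2 * c * infDist z (innerSlab ε)) / dist x z ^ 6 := by
        have hexp : Real.exp (-2 * c * dist x z) ≤ Real.exp (-2 * c * infDist z (innerSlab ε)) :=
          Real.exp_le_exp.2 (by nlinarith)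
        have hgap : 0 ≤ 1 - cylRadius x := by linarith [hx.1]
        gcongr
    _ = Real.exp (-2 * c * infDist z (innerSlab ε)) * (ε ^ 6 * (dist x z ^ 4)⁻¹) := by
        field_simp

theorem stmt_17 (c : ℝ) (hc : 0 < c) :
    ∃ C > (0 : ℝ), ∀ ε : ℝ, 0 < ε → ε ≤ 1 →
      ∀ z : EuclideanSpace ℝ (Fin 3), (z 1) ^ 2 + (z 2) ^ 2 = 1 →
        (∫ x in {x : EuclideanSpace ℝ (Fin 3) |
              Real.sqrt ((x 1) ^ 2 + (x 2) ^ 2) < 1 - 8 * ε ∧ 0 < x 0 ∧ x 0 < 1},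
            ε ^ 6 * (1 - Real.sqrt ((x 1) ^ 2 + (x 2) ^ 2)) ^ 2
              * Real.exp (-2 * c * dist x z) / (dist x z) ^ 6)
          ≤ C * ε ^ 5 * Real.exp (-2 * c * Metric.infDist z
              {x : EuclideanSpace ℝ (Fin 3) |
                Real.sqrt ((x 1) ^ 2 + (x 2) ^ 2) < 1 - 8 * ε ∧ 0 < x 0 ∧ x 0 < 1}) := by
  set K := ∫ y : EuclideanSpace ℝ (Fin 3), (max ‖y‖ 1 ^ 4)⁻¹
  have hK : 0 ≤ K := integral_nonneg fun y => by positivity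
  refine ⟨K / 8 + 1, by positivity, fun ε hε _ z hz => ?_⟩
  change ∫ x in innerSlab ε, ε ^ 6 * (1 - cylRadius x) ^ 2 * Real.exp (-2 * c * dist x z)
      / dist x z ^ 6 ≤ (K / 8 + 1) * ε ^ 5 * Real.exp (-2 * c * infDist z (innerSlab ε))
  set w := Real.exp (-2 * c * infDist z (innerSlab ε))
  have hz' : cylRadius z = 1 := by simp [cylRadius, hz]
  have hkernel : Integrable fun x => w * (ε ^ 6 * (max ‖x - z‖ (8 * ε) ^ 4)⁻¹) :=
    (((integrable_inv_max_norm_pow volume (by simp) (by positivity)).comp_sub_right z).const_mul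
      _).const_mul _
  calc _ ≤ ∫ x in innerSlab ε, w * (ε ^ 6 * (max ‖x - z‖ (8 * ε) ^ 4)⁻¹) :=
        integral_mono_of_nonneg (Filter.Eventually.of_forall fun x => by positivity)
          hkernel.integrableOn
          (ae_restrict_of_forall_mem (measurableSet_innerSlab ε)
            fun x hx => slab_integrand_le hc.le hε hz' hx)
    _ ≤ ∫ x, w * (ε ^ 6 * (max ‖x - z‖ (8 * ε) ^ 4)⁻¹) :=
        setIntegral_le_integral hkernel (Filter.Eventually.of_forall fun x => by positivity)
    _ = w * (ε ^ 6 * ((8 * ε) ^ 3 / (8 * ε) ^ 4 * K)) := by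
        rw [integral_const_mul, integral_const_mul,
          integral_sub_right_eq_self (fun y => (max ‖y‖ (8 * ε) ^ 4)⁻¹) z,
          integral_inv_max_norm_pow volume 4 (by positivity), finrank_euclideanSpace_fin]
    _ ≤ (K / 8 + 1) * ε ^ 5 * w := by
        have hw : 0 < w := Real.exp_pos _
        field_simp
        nlinarith [pow_pos hε 5]
end
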